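/- For $1\le\ell\le k$ (indices $0\le i_1<\cdots<i_k\le d+1$), consider the shelling of $\Diamond(\Gamma_{i_1},\ldots,\Gamma_{i_k})$ obtained by listing, for $\ell=1,\ldots,k$ in order, the facets of $\Diamond(\Gamma_{i_\ell})$ in degree lexicographic order with respect to an initial facet $F^{(\ell)}_0$. Then the restriction face of the facet $F^{(\ell)}_i$ is $R^{(\ell)}_i=\{i_1,\ldots,i_{\ell-1}\}\cup\{F^{(\ell)}_i(j): F^{(\ell)}_i \text{ differs from } F^{(\ell)}_0 \text{ in position } j\}$; in particular this ordering is a shelling order for $\Diamond(\Gamma_{i_1},\ldots,\Gamma_{i_k})$. -/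

import Mathlib

/-!
Unwinding the stellar subdivisions, the facets of `⋄(Γ_i)` are the sets
`{0,…,i-1, v_i} ∪ {j ∈ (i,d] \ S} ∪ {v_j : j ∈ S}` for `S ⊆ (i,d]`, and `⋄` commutes with
unions, so the facets of `⋄(Γ_{i_1},…,Γ_{i_k})` are these facets for all blocks, pairwise distinct.
Measured against any reference set, the positions where the facet with parameter `S` differs
form `S ∆ T` for a fixed `T`.

Let `F` be the `t`-th facet of block `ℓ` and `R` the claimed restriction face. No earlier facet
contains `R`: a facet of block `u < ℓ` misses the vertex `i_u ∈ R`, and an earlier facet `G` of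
block `ℓ` containing the vertices of `F` at the positions where `F` differs would differ at least
there, which is incompatible with `G` preceding `F` in degree lexicographic order. Every face of
`F` avoiding the earlier facets contains `R`, because `F` minus any `x ∈ R` lies in an earlier
facet: for `x = i_u` in the facet of block `u` with parameter `(S ∪ {i_ℓ}) ∩ (i_u,d]`, and for
`x` at a differing position `m` in the facet obtained by flipping position `m`, which differs in
one position fewer.
-/

namespace Paper

/-- Ambient vertex type in dimension `d`: original vertices `0,…,d+1` (left)
and new vertices `v_0,…,v_d` (right). -/
abbrev V (d : ℕ) := Sum (Fin (d+2)) (Fin (d+1))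

def origV (d m : ℕ) : V d := Sum.inl ⟨m % (d+2), Nat.mod_lt m (by omega)⟩
def newV (d m : ℕ) : V d := Sum.inr ⟨m % (d+1), Nat.mod_lt m (by omega)⟩

variable {W : Type*} [DecidableEq W] {W' : Type*} [DecidableEq W']

def IsComplex (Δ : Set (Finset W)) : Prop := ∀ F ∈ Δ, ∀ G, G ⊆ F → G ∈ Δ

def isFacet (Δ : Set (Finset W)) (F : Finset W) : Prop :=
  F ∈ Δ ∧ ∀ G ∈ Δ, F ⊆ G → G = F

def simplexOn (A : Finset W) : Set (Finset W) := {F | F ⊆ A}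

def bdrySimplex (A : Finset W) : Set (Finset W) := {F | F ⊂ A}

def joinC (Δ Γ : Set (Finset W)) : Set (Finset W) := {s | ∃ a ∈ Δ, ∃ b ∈ Γ, s = a ∪ b}

def lkC (Δ : Set (Finset W)) (F : Finset W) : Set (Finset W) :=
  {G | Disjoint F G ∧ F ∪ G ∈ Δ}

def delFace (Δ : Set (Finset W)) (F : Finset W) : Set (Finset W) := {G ∈ Δ | ¬ F ⊆ G}

/-- Stellar subdivision at `F` with new vertex `v`. -/
def sdC (v : W) (F : Finset W) (Δ : Set (Finset W)) : Set (Finset W) :=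
  delFace Δ F ∪ joinC (simplexOn {v}) (joinC (bdrySimplex F) (lkC Δ F))

/-- Deletion of a subcomplex: the complex generated by the facets of `Δ`
that are not facets of `Γ`. -/
def delSub (Δ Γ : Set (Finset W)) : Set (Finset W) :=
  {G | ∃ F, isFacet Δ F ∧ ¬ isFacet Γ F ∧ G ⊆ F}

def IsInduced (Γ Δ : Set (Finset W)) : Prop :=
  Γ ⊆ Δ ∧ ∀ F ∈ Δ, (∀ v ∈ F, ({v} : Finset W) ∈ Γ) → F ∈ Γ

/-- Simplicial isomorphism (via a permutation of the ambient vertex set). -/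
def IsoC (Δ Γ : Set (Finset W)) : Prop :=
  ∃ e : Equiv.Perm W, ∀ F : Finset W, F ∈ Δ ↔ F.image (⇑e) ∈ Γ

def mapC (f : W → W') (Δ : Set (Finset W)) : Set (Finset W') := {F | ∃ G ∈ Δ, F = G.image f}

/-- Number of faces of cardinality `i` (i.e. dimension `i-1`). -/
noncomputable def fnum (Δ : Set (Finset W)) (i : ℕ) : ℕ := {F | F ∈ Δ ∧ F.card = i}.ncard

/-- `h`-numbers of a `d`-dimensional complex. -/
noncomputable def hnum (d : ℕ) (Δ : Set (Finset W)) (j : ℕ) : ℤ :=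
  ∑ i ∈ Finset.range (j+1),
    (-1 : ℤ)^(j-i) * ((d+1-i).choose (d+1-j) : ℤ) * (fnum Δ i : ℤ)

/-- `R` is the restriction face of the `i`-th facet of the ordering `L`. -/
def IsRestriction (L : List (Finset W)) (i : ℕ) (R : Finset W) : Prop :=
  R ⊆ L.getD i ∅ ∧ (∀ j < i, ¬ R ⊆ L.getD j ∅) ∧
    ∀ G ⊆ L.getD i ∅, (∀ j < i, ¬ G ⊆ L.getD j ∅) → R ⊆ G

def IsShelling (Δ : Set (Finset W)) (L : List (Finset W)) : Prop :=
  L.Nodup ∧ (∀ F, F ∈ L ↔ isFacet Δ F) ∧ ∀ i < L.length, ∃ R, IsRestriction L i R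

def Shellable (Δ : Set (Finset W)) : Prop := ∃ L, IsShelling Δ L

def IsRelRestriction (Sg : Set (Finset W)) (L : List (Finset W)) (i : ℕ) (R : Finset W) : Prop :=
  R ⊆ L.getD i ∅ ∧ R ∉ Sg ∧ (∀ j < i, ¬ R ⊆ L.getD j ∅) ∧
    ∀ G ⊆ L.getD i ∅, G ∉ Sg → (∀ j < i, ¬ G ⊆ L.getD j ∅) → R ⊆ G

/-- Shelling of the relative complex `(Δ, Sg)`. -/
def IsRelShelling (Δ Sg : Set (Finset W)) (L : List (Finset W)) : Prop :=
  L.Nodup ∧ (∀ F, F ∈ L ↔ (isFacet Δ F ∧ F ∉ Sg)) ∧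
    ∀ i < L.length, ∃ R, IsRelRestriction Sg L i R

/-- The facet of the `(d+1)`-simplex on `{0,…,d+1}` omitting vertex `i`. -/
def Gface (d i : ℕ) : Finset (V d) :=
  ((Finset.range (d+2)).filter (fun j => j ≠ i)).image (origV d)

def GammaC (d i : ℕ) : Set (Finset (V d)) := simplexOn (Gface d i)

def GammaU (d : ℕ) (I : Finset ℕ) : Set (Finset (V d)) := {F | ∃ i ∈ I, F ⊆ Gface d i}

/-- The face `F_i = {i+1,…,d+1}` subdivided by the diamond operation. -/
def Fsub (d i : ℕ) : Finset (V d) := (Finset.Ioc i (d+1)).image (origV d)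

/-- The diamond operation: successive stellar subdivisions at `F_0, F_1, …, F_d`
with new vertices `v_0,…,v_d` (subdivision at a non-face has no effect). -/
def Diam (d : ℕ) (Δ : Set (Finset (V d))) : Set (Finset (V d)) :=
  (List.range (d+1)).foldl (fun Γ i => sdC (newV d i) (Fsub d i) Γ) Δ

def DiamU (d : ℕ) (I : Finset ℕ) : Set (Finset (V d)) := Diam d (GammaU d I)

/-- Boundary complex of the cross-polytope on the vertex pairs `{j, v_j}`, `j ∈ S`. -/
def crossN (d : ℕ) (S : Finset ℕ) : Set (Finset (V d)) :=
  {F | (∀ x ∈ F, ∃ j ∈ S, x = origV d j ∨ x = newV d j) ∧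
       ∀ j ∈ S, ¬ (origV d j ∈ F ∧ newV d j ∈ F)}

/-- Boundary complex: generated by the faces of cardinality `n` contained in
exactly one facet. -/
def bdryC (n : ℕ) (Δ : Set (Finset W)) : Set (Finset W) :=
  {G | ∃ F, G ⊆ F ∧ F ∈ Δ ∧ F.card = n ∧ ∃! H, isFacet Δ H ∧ F ⊆ H}

/-- Positions in `P` at which `G` differs from the reference facet `F0`. -/
def diffSet (d : ℕ) (P : Finset ℕ) (F0 G : Finset (V d)) : Finset ℕ :=
  P.filter (fun j => decide (origV d j ∈ G) ≠ decide (origV d j ∈ F0))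

/-- Degree lexicographic comparison of characteristic (difference) sets. -/
def dlexLT (D D' : Finset ℕ) : Prop :=
  D.card < D'.card ∨
    (D.card = D'.card ∧ ∃ m, m ∉ D ∧ m ∈ D' ∧ ∀ j < m, (j ∈ D ↔ j ∈ D'))

/-- `L` lists the facets of `Δ` in degree lexicographic order w.r.t. `F0`. -/
def IsDegLexOrder (d : ℕ) (P : Finset ℕ) (Δ : Set (Finset (V d)))
    (F0 : Finset (V d)) (L : List (Finset (V d))) : Prop :=
  L.Nodup ∧ (∀ F, F ∈ L ↔ isFacet Δ F) ∧
    L.Pairwise (fun G G' => dlexLT (diffSet d P F0 G) (diffSet d P F0 G'))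

/-- Vertices of `F` sitting at the positions in `D`. -/
def posVerts (d : ℕ) (F : Finset (V d)) (D : Finset ℕ) : Finset (V d) :=
  F.filter (fun x => ∃ j ∈ D, x = origV d j ∨ x = newV d j)

def IsoN (Δ Γ : Set (Finset ℕ)) : Prop :=
  ∃ e : Equiv.Perm ℕ, ∀ F : Finset ℕ, F ∈ Δ ↔ F.image (⇑e) ∈ Γ

def StellarMove (Δ Γ : Set (Finset ℕ)) : Prop :=
  ∃ (F : Finset ℕ) (v : ℕ), F ∈ Δ ∧ F ≠ ∅ ∧ (∀ G ∈ Δ, v ∉ G) ∧ Γ = sdC v F Δ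

/-- PL homeomorphism of simplicial complexes, encoded via Alexander's theorem as
stellar equivalence: the equivalence relation generated by stellar subdivisions
(and their inverses, the welds) together with simplicial isomorphisms. -/
def PLHomeo (Δ Γ : Set (Finset ℕ)) : Prop :=
  Relation.EqvGen (fun A B => StellarMove A B ∨ IsoN A B) Δ Γ

def encV (d : ℕ) : V d → ℕ := Sum.elim (fun j => 2 * j.val) (fun j => 2 * j.val + 1)

def toN (d : ℕ) (Δ : Set (Finset (V d))) : Set (Finset ℕ) := mapC (encV d) Δ

def ballN (c : ℕ) : Set (Finset ℕ) := {F | F ⊆ Finset.range c}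

def sphereN (c : ℕ) : Set (Finset ℕ) := {F | F ⊂ Finset.range (c+1)}

/-- `Δ` is a combinatorial ball of dimension `c-1` (a `(c-1)`-simplex has `c` vertices). -/
def IsCombBall (d c : ℕ) (Δ : Set (Finset (V d))) : Prop := PLHomeo (toN d Δ) (ballN c)

/-- `Δ` is a combinatorial sphere of dimension `c-1`. -/
def IsCombSphere (d c : ℕ) (Δ : Set (Finset (V d))) : Prop := PLHomeo (toN d Δ) (sphereN c)

def ConnC (Δ : Set (Finset W)) : Prop :=
  ∀ u v : W, ({u} : Finset W) ∈ Δ → ({v} : Finset W) ∈ Δ →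
    Relation.ReflTransGen (fun a b => ({a, b} : Finset W) ∈ Δ) u v

/-- Combinatorial `d`-manifold (possibly with boundary): connected, pure, and all
links of nonempty faces are combinatorial balls or spheres of dimension `d - |F|`. -/
def IsCombManifold (d : ℕ) (Δ : Set (Finset (V d))) : Prop :=
  IsComplex Δ ∧ (∅ : Finset (V d)) ∈ Δ ∧ ConnC Δ ∧
  (∀ F ∈ Δ, ∃ G, isFacet Δ G ∧ F ⊆ G ∧ G.card = d+1) ∧
  ∀ F ∈ Δ, F ≠ (∅ : Finset (V d)) →
    (IsCombBall d (d+1-F.card) (lkC Δ F) ∨ IsCombSphere d (d+1-F.card) (lkC Δ F))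

def liftV (d : ℕ) : V d → V (d+1) := Sum.map Fin.castSucc Fin.castSucc

/-- The relabeling `π : i ↦ i+1`, `v_i ↦ v_{i+1}`. -/
def piV (d : ℕ) : V d → V (d+1) := Sum.map Fin.succ Fin.succ

/-- The relabeling `ρ : i ↦ i-1`, `v_i ↦ v_{i-1}` (indices mod `d+1`). -/
def rhoV (d : ℕ) : V d → V d := fun x =>
  match x with
  | Sum.inl j => origV d ((j.val + d) % (d+1))
  | Sum.inr j => newV d ((j.val + d) % (d+1))

/-- `ψ` swaps the vertices `d` and `v_d`. -/
def psiV (d : ℕ) : V d → V d := fun x => Equiv.swap (origV d d) (newV d d) x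

def sigmaV (d : ℕ) : V d → V d := psiV d ∘ rhoV d

/-- `Δ` is (isomorphic to) the boundary complex of the `(d+1)`-dimensional
cross-polytope. -/
def IsCrossBdry (d : ℕ) (Δ : Set (Finset W)) : Prop :=
  ∃ f : Fin (d+1) × Bool → W, Function.Injective f ∧
    Δ = {F | (∀ v ∈ F, ∃ p, v = f p) ∧
             ∀ j : Fin (d+1), ¬ (f (j, true) ∈ F ∧ f (j, false) ∈ F)}

/-- `Sg` is a connected sum of `Δ` and `Γ`: they meet exactly in the full simplex
on a common facet `F`, which is removed. -/
def IsConnSum (Δ Γ Sg : Set (Finset W)) : Prop :=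
  ∃ F : Finset W, isFacet Δ F ∧ isFacet Γ F ∧ Δ ∩ Γ = simplexOn F ∧ Sg = (Δ ∪ Γ) \ {F}

/-- Connected sum of `m+1` copies of the boundary of the `(d+1)`-cross-polytope. -/
def IsCrossStacked (d : ℕ) : ℕ → Set (Finset W) → Prop
  | 0, Δ => IsCrossBdry d Δ
  | (m+1), Δ => ∃ A B : Set (Finset W), IsCrossStacked d m A ∧ IsCrossBdry d B ∧ IsConnSum A B Δ

/-- The initial facet of the block `Diam(Γ_{iℓ})` (for block index `ℓ ≥ 1`;
block `0` uses the facet `G0` meeting the boundary). -/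
def initFacet (d i1 iℓ : ℕ) (G0 : Finset (V d)) (ℓ : ℕ) : Finset (V d) :=
  if ℓ = 0 then G0
  else ((Finset.range iℓ).image (origV d)) ∪ {newV d iℓ} ∪
       ((Finset.Ioo iℓ (max i1 iℓ)).image (origV d)) ∪
       ((Finset.Icc (max i1 iℓ) d).image (newV d))



open Finset
open scoped symmDiff

section Lists

variable {α : Type*}

theorem List.flatten_eq_take_append {Ls : List (List α)} {ℓ : ℕ} (hℓ : ℓ < Ls.length) :
    Ls.flatten = (Ls.take ℓ).flatten ++ (Ls[ℓ] ++ (Ls.drop (ℓ + 1)).flatten) := by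
  have h := congrArg List.flatten (List.take_append_drop ℓ Ls)
  rw [List.drop_eq_getElem_cons hℓ, List.flatten_append, List.flatten_cons] at h
  exact h.symm

theorem List.getD_flatten_offset {Ls : List (List α)} {ℓ t : ℕ} (hℓ : ℓ < Ls.length)
    (ht : t < Ls[ℓ].length) (a : α) :
    Ls.flatten.getD ((Ls.take ℓ).flatten.length + t) a = Ls[ℓ][t] := by
  rw [List.flatten_eq_take_append hℓ, List.getD_append_right _ _ _ _ (by omega),
    Nat.add_sub_cancel_left, List.getD_append _ _ _ _ ht, List.getD_eq_getElem]

theorem List.offset_lt_length_flatten {Ls : List (List α)} {ℓ t : ℕ} (hℓ : ℓ < Ls.length)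
    (ht : t < Ls[ℓ].length) : (Ls.take ℓ).flatten.length + t < Ls.flatten.length := by
  rw [List.flatten_eq_take_append hℓ, List.length_append, List.length_append]
  omega

theorem List.take_flatten_offset {Ls : List (List α)} {ℓ t : ℕ} (hℓ : ℓ < Ls.length)
    (ht : t ≤ Ls[ℓ].length) :
    Ls.flatten.take ((Ls.take ℓ).flatten.length + t) = (Ls.take ℓ).flatten ++ Ls[ℓ].take t := by
  rw [List.flatten_eq_take_append hℓ, List.take_length_add_append,
    List.take_append_of_le_length ht]

theorem List.exists_offset_of_lt_length_flatten {Ls : List (List α)} {j : ℕ}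
    (hj : j < Ls.flatten.length) :
    ∃ ℓ, ∃ hℓ : ℓ < Ls.length, ∃ t < Ls[ℓ].length, j = (Ls.take ℓ).flatten.length + t := by
  induction Ls generalizing j with
  | nil => simp at hj
  | cons B Ls ih =>
    rw [List.flatten_cons, List.length_append] at hj
    by_cases hjB : j < B.length
    · exact ⟨0, by simp, j, hjB, by simp⟩
    · obtain ⟨ℓ, hℓ, t, ht, he⟩ := ih (j := j - B.length) (by omega)
      refine ⟨ℓ + 1, by simpa using hℓ, t, ht, ?_⟩
      simp only [List.take_succ_cons, List.flatten_cons, List.length_append]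
      omega

theorem List.mem_take_iff_exists_lt {l : List α} {ℓ : ℕ} {a : α} :
    a ∈ l.take ℓ ↔ ∃ u, ∃ hu : u < l.length, u < ℓ ∧ l[u] = a := by
  rw [List.mem_take_iff_getElem]
  exact ⟨fun ⟨u, hu, h⟩ => ⟨u, (lt_min_iff.1 hu).2, (lt_min_iff.1 hu).1, h⟩,
    fun ⟨u, hu, huℓ, h⟩ => ⟨u, lt_min_iff.2 ⟨huℓ, hu⟩, h⟩⟩

theorem List.mem_take_of_pairwise {r : α → α → Prop} {L : List α} (hL : L.Pairwise r)
    {t : ℕ} (ht : t < L.length) {a : α} (ha : a ∈ L) (hne : a ≠ L[t]) (hr : ¬ r L[t] a) :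
    a ∈ L.take t := by
  rw [← List.take_append_drop t L, List.mem_append] at ha
  refine ha.resolve_right fun hd => ?_
  rw [List.drop_eq_getElem_cons ht, List.mem_cons] at hd
  refine hd.elim hne fun hd' => hr (hL.rel_of_mem_take_of_mem_drop ?_ hd')
  exact List.mem_take_iff_getElem.2 ⟨t, by simp [ht], rfl⟩

end Lists

section Shellings

variable {W : Type*} [DecidableEq W]

theorem isRestriction_of_erase_subset {L : List (Finset W)} {i : ℕ} (hi : i < L.length)
    {F R : Finset W} (hF : L.getD i ∅ = F) (hR : R ⊆ F) (hnew : ∀ G ∈ L.take i, ¬ R ⊆ G)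
    (herase : ∀ x ∈ R, ∃ G ∈ L.take i, F.erase x ⊆ G) : IsRestriction L i R := by
  have hearlier : ∀ j < i, L.getD j ∅ ∈ L.take i := fun j hj => by
    rw [List.getD_eq_getElem _ _ (by omega)]
    exact List.mem_take_iff_getElem.2 ⟨j, by simp [hj]; omega, rfl⟩
  rw [IsRestriction, hF]
  refine ⟨hR, fun j hj => hnew _ (hearlier j hj), fun G hG hGnew x hxR => ?_⟩
  by_contra hxG
  obtain ⟨H, hH, hsub⟩ := herase x hxR
  obtain ⟨j, hj, rfl⟩ := List.mem_take_iff_getElem.1 hH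
  refine hGnew j (lt_min_iff.1 hj).1 fun y hy => ?_
  rw [List.getD_eq_getElem _ _ (lt_min_iff.1 hj).2]
  exact hsub (Finset.mem_erase.2 ⟨fun h => hxG (h ▸ hy), hG hy⟩)

end Shellings

theorem symmDiff_subset_of_subset {α : Type*} [DecidableEq α] {s t u : Finset α}
    (hs : s ⊆ u) (ht : t ⊆ u) : s ∆ t ⊆ u :=
  symmDiff_le_sup.trans (union_subset hs ht)

theorem dlexLT.card_le {D D' : Finset ℕ} (h : dlexLT D D') : D.card ≤ D'.card :=
  h.elim le_of_lt fun h => h.1.le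

theorem dlexLT.not_subset {D D' : Finset ℕ} (h : dlexLT D D') : ¬ D' ⊆ D := fun hsub => by
  have heq : D' = D := Finset.eq_of_subset_of_card_le hsub h.card_le
  rcases h with hlt | ⟨-, m, hmD, hmD', -⟩
  · exact (heq ▸ hlt).false
  · exact hmD (heq ▸ hmD')

section StellarSubdivision

variable {W ι : Type*}

def downClosure (Φ : ι → Finset W) (C : Set ι) : Set (Finset W) := {G | ∃ c ∈ C, G ⊆ Φ c}

theorem isFacet_downClosure_iff {Φ : ι → Finset W} {C : Set ι}
    (hanti : ∀ c ∈ C, ∀ c' ∈ C, Φ c ⊆ Φ c' → Φ c = Φ c') {F : Finset W} :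
    isFacet (downClosure Φ C) F ↔ ∃ c ∈ C, F = Φ c := by
  constructor
  · rintro ⟨⟨c, hc, hFc⟩, hmax⟩
    exact ⟨c, hc, (hmax _ ⟨c, hc, subset_rfl⟩ hFc).symm⟩
  · rintro ⟨c, hc, rfl⟩
    refine ⟨⟨c, hc, subset_rfl⟩, fun G ⟨c', hc', hGc'⟩ hcG => ?_⟩
    rw [← hanti c hc c' hc' (hcG.trans hGc')] at hGc'
    exact hGc'.antisymm hcG

variable [DecidableEq W]

theorem sdC_eq_self_of_notMem {Δ : Set (Finset W)} (hΔ : IsComplex Δ) {F : Finset W} (hF : F ∉ Δ)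
    (v : W) : sdC v F Δ = Δ := by
  ext G
  constructor
  · rintro (⟨hG, -⟩ | ⟨-, -, -, ⟨-, -, e, ⟨-, he⟩, -⟩, -⟩)
    · exact hG
    · exact absurd (hΔ _ he F subset_union_left) hF
  · exact fun hG => Or.inl ⟨hG, fun hFG => hF (hΔ G hG F hFG)⟩

theorem mem_sdC_downClosure {Φ : ι → Finset W} {C : Set ι} {F G : Finset W} {v : W}
    (hG : G ∈ sdC v F (downClosure Φ C)) :
    (∃ c ∈ C, ¬ F ⊆ Φ c ∧ G ⊆ Φ c) ∨
      ∃ c ∈ C, F ⊆ Φ c ∧ ∃ y ∈ F, G ⊆ insert v (Φ c \ F ∪ F.erase y) := by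
  rcases hG with ⟨⟨c, hc, hGc⟩, hFG⟩ | ⟨a, ha, -, ⟨b, hb, e, ⟨hFe, c, hc, hbc⟩, rfl⟩, rfl⟩
  · by_cases hFc : F ⊆ Φ c
    · obtain ⟨y, hyF, hyG⟩ := not_subset.1 hFG
      refine Or.inr ⟨c, hc, hFc, y, hyF, fun x hx => ?_⟩
      have : x ≠ y := by rintro rfl; exact hyG hx
      have := hGc hx
      simp only [mem_insert, mem_union, mem_sdiff, mem_erase]
      tauto
    · exact Or.inl ⟨c, hc, hFc, hGc⟩
  · obtain ⟨y, hyF, hyb⟩ := exists_of_ssubset hb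
    refine Or.inr ⟨c, hc, (union_subset_iff.1 hbc).1, y, hyF, fun x hx => ?_⟩
    have hav : x ∈ a → x = v := fun h => mem_singleton.1 (ha h)
    have hby : x ∈ b → x ≠ y := by rintro h rfl; exact hyb h
    have hbF : x ∈ b → x ∈ F := fun h => hb.1 h
    have heF : x ∈ e → x ∉ F := fun h hF => disjoint_left.1 hFe hF h
    have hec : x ∈ e → x ∈ Φ c := fun h => hbc (mem_union_right _ h)
    simp only [mem_insert, mem_union, mem_sdiff, mem_erase] at hx ⊢
    tauto

theorem mem_sdC_of_subset_cone {Φ : ι → Finset W} {C : Set ι} {F G : Finset W} {v y : W} {c : ι}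
    (hc : c ∈ C) (hvc : v ∉ Φ c) (hFc : F ⊆ Φ c) (hyF : y ∈ F)
    (hGc : G ⊆ insert v (Φ c \ F ∪ F.erase y)) : G ∈ sdC v F (downClosure Φ C) := by
  have hvF : v ∉ F := fun h => hvc (hFc h)
  refine Or.inr ⟨G.filter (· = v), fun x hx => by simp_all, G.filter (· ≠ v),
    ⟨G ∩ F, ⟨inter_subset_right, fun hFG => ?_⟩, G.filter (· ≠ v) \ F,
      ⟨sdiff_disjoint.symm, c, hc, union_subset hFc fun x hx => ?_⟩, ?_⟩, ?_⟩
  · have := hGc (mem_inter.1 (hFG hyF)).1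
    simp only [mem_insert, mem_union, mem_sdiff, mem_erase] at this
    rcases this with rfl | ⟨-, h⟩ | ⟨h, -⟩
    exacts [hvF hyF, h hyF, h rfl]
  · simp only [mem_sdiff, mem_filter] at hx
    have := hGc hx.1.1
    simp only [mem_insert, mem_union, mem_sdiff, mem_erase] at this
    tauto
  · ext x
    have : x ∈ F → x ≠ v := by rintro h rfl; exact hvF h
    simp only [mem_union, mem_inter, mem_sdiff, mem_filter]
    tauto
  · ext x
    simp only [mem_union, mem_filter]
    tauto

theorem sdC_downClosure {Φ : ι → Finset W} {C : Set ι} {F : Finset W} {v : W}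
    (hv : ∀ c ∈ C, v ∉ Φ c) :
    sdC v F (downClosure Φ C) =
      {G | (∃ c ∈ C, ¬ F ⊆ Φ c ∧ G ⊆ Φ c) ∨
        ∃ c ∈ C, F ⊆ Φ c ∧ ∃ y ∈ F, G ⊆ insert v (Φ c \ F ∪ F.erase y)} := by
  ext G
  refine ⟨mem_sdC_downClosure, ?_⟩
  rintro (⟨c, hc, hFc, hGc⟩ | ⟨c, hc, hFc, y, hyF, hGc⟩)
  · exact Or.inl ⟨⟨c, hc, hGc⟩, fun h => hFc (h.trans hGc)⟩
  · exact mem_sdC_of_subset_cone hc (hv c hc) hFc hyF hGc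

end StellarSubdivision

section StellarUnion

variable {W : Type*} [DecidableEq W] {ι : Sort*}

theorem sdC_iUnion (v : W) (F : Finset W) (Δ : ι → Set (Finset W)) :
    sdC v F (⋃ i, Δ i) = ⋃ i, sdC v F (Δ i) := by
  ext G
  simp only [Set.mem_iUnion]
  constructor
  · rintro (⟨hG, hFG⟩ | ⟨a, ha, -, ⟨b, hb, e, ⟨hFe, he⟩, rfl⟩, rfl⟩)
    · obtain ⟨i, hi⟩ := Set.mem_iUnion.1 hG
      exact ⟨i, Or.inl ⟨hi, hFG⟩⟩
    · obtain ⟨i, hi⟩ := Set.mem_iUnion.1 he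
      exact ⟨i, Or.inr ⟨a, ha, _, ⟨b, hb, e, ⟨hFe, hi⟩, rfl⟩, rfl⟩⟩
  · rintro ⟨i, ⟨hG, hFG⟩ | ⟨a, ha, -, ⟨b, hb, e, ⟨hFe, he⟩, rfl⟩, rfl⟩⟩
    · exact Or.inl ⟨Set.mem_iUnion.2 ⟨i, hG⟩, hFG⟩
    · exact Or.inr ⟨a, ha, _, ⟨b, hb, e, ⟨hFe, Set.mem_iUnion.2 ⟨i, he⟩⟩, rfl⟩, rfl⟩

theorem foldl_sdC_iUnion (v : ℕ → W) (F : ℕ → Finset W) (L : List ℕ) (Δ : ι → Set (Finset W)) :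
    L.foldl (fun Γ j => sdC (v j) (F j) Γ) (⋃ i, Δ i) =
      ⋃ i, L.foldl (fun Γ j => sdC (v j) (F j) Γ) (Δ i) := by
  induction L generalizing Δ with
  | nil => rfl
  | cons j L ih => simp only [List.foldl_cons, sdC_iUnion, ih]

end StellarUnion

theorem Diam_iUnion {ι : Sort*} (d : ℕ) (Δ : ι → Set (Finset (V d))) :
    Diam d (⋃ i, Δ i) = ⋃ i, Diam d (Δ i) :=
  foldl_sdC_iUnion _ _ _ Δ

theorem origV_eq {d m : ℕ} (h : m ≤ d + 1) : origV d m = Sum.inl ⟨m, by omega⟩ := by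
  simp [origV, Nat.mod_eq_of_lt (show m < d + 2 by omega)]

theorem newV_eq {d m : ℕ} (h : m ≤ d) : newV d m = Sum.inr ⟨m, by omega⟩ := by
  simp [newV, Nat.mod_eq_of_lt (show m < d + 1 by omega)]

section Diamond

variable {d : ℕ}

@[simp] theorem inl_mem_Gface {i : ℕ} {a : Fin (d + 2)} : Sum.inl a ∈ Gface d i ↔ (a : ℕ) ≠ i := by
  simp only [Gface, mem_image, mem_filter, mem_range]
  constructor
  · rintro ⟨m, ⟨hm, hmi⟩, he⟩
    rw [origV_eq (by omega)] at he
    cases he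
    exact hmi
  · exact fun h => ⟨a, ⟨a.isLt, h⟩, origV_eq (by omega)⟩

@[simp] theorem inr_notMem_Gface {i : ℕ} {a : Fin (d + 1)} : Sum.inr a ∉ Gface d i := by
  simp only [Gface, mem_image, mem_filter, mem_range, not_exists, not_and]
  rintro m ⟨hm, -⟩ he
  rw [origV_eq (by omega)] at he
  cases he

@[simp] theorem inl_mem_Fsub {j : ℕ} {a : Fin (d + 2)} : Sum.inl a ∈ Fsub d j ↔ j < a := by
  simp only [Fsub, mem_image, mem_Ioc]
  constructor
  · rintro ⟨m, ⟨hjm, hmd⟩, he⟩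
    rw [origV_eq hmd] at he
    cases he
    exact hjm
  · exact fun h => ⟨a, ⟨h, by omega⟩, origV_eq (by omega)⟩

@[simp] theorem inr_notMem_Fsub {j : ℕ} {a : Fin (d + 1)} : Sum.inr a ∉ Fsub d j := by
  simp only [Fsub, mem_image, not_exists, not_and]
  intro m hm he
  rw [origV_eq (by simp at hm; omega)] at he
  cases he

/-- After the subdivisions at `F_i, …, F_m`, the facets of `⋄(Γ_i)` are these for `S ⊆ (i,m]` and
`x ∈ (m,d+1]`: `S` records the positions at which `v_j` has replaced `j`, and `x` is the vertex
still missing. -/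
def stageFacet (d i x : ℕ) (S : Finset ℕ) : Finset (V d) :=
  (univ.filter fun a : Fin (d + 2) => (a : ℕ) < i ∨ (i < a ∧ (a : ℕ) ∉ S ∧ (a : ℕ) ≠ x)).disjSum
    (univ.filter fun a : Fin (d + 1) => (a : ℕ) = i ∨ (i < a ∧ (a : ℕ) ∈ S))

@[simp] theorem inl_mem_stageFacet {i x : ℕ} {S : Finset ℕ} {a : Fin (d + 2)} :
    Sum.inl a ∈ stageFacet d i x S ↔ (a : ℕ) < i ∨ (i < a ∧ (a : ℕ) ∉ S ∧ (a : ℕ) ≠ x) := by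
  simp [stageFacet]

@[simp] theorem inr_mem_stageFacet {i x : ℕ} {S : Finset ℕ} {a : Fin (d + 1)} :
    Sum.inr a ∈ stageFacet d i x S ↔ (a : ℕ) = i ∨ (i < a ∧ (a : ℕ) ∈ S) := by
  simp [stageFacet]

theorem origV_mem_Gface {i m : ℕ} (hm : m ≤ d + 1) : origV d m ∈ Gface d i ↔ m ≠ i := by
  rw [origV_eq hm]
  exact inl_mem_Gface

theorem origV_mem_stageFacet {i x m : ℕ} {S : Finset ℕ} (hm : m ≤ d + 1) :
    origV d m ∈ stageFacet d i x S ↔ m < i ∨ (i < m ∧ m ∉ S ∧ m ≠ x) := by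
  rw [origV_eq hm]
  exact inl_mem_stageFacet

theorem newV_mem_stageFacet {i x m : ℕ} {S : Finset ℕ} (hm : m ≤ d) :
    newV d m ∈ stageFacet d i x S ↔ m = i ∨ (i < m ∧ m ∈ S) := by
  rw [newV_eq hm]
  exact inr_mem_stageFacet

theorem cone_Gface_eq_stageFacet {i y : ℕ} (hi : i ≤ d) (hy : i < y) (hyd : y ≤ d + 1) :
    insert (newV d i) (Gface d i \ Fsub d i ∪ (Fsub d i).erase (origV d y)) =
      stageFacet d i y ∅ := by
  ext (a | a) <;> rw [newV_eq hi, origV_eq hyd] <;> simp [Fin.ext_iff]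
  omega

theorem cone_stageFacet_eq {i m y : ℕ} {S : Finset ℕ} (him : i ≤ m) (hmd : m + 1 ≤ d)
    (hy : m + 1 < y) (hyd : y ≤ d + 1) (hS : S ⊆ Ioc i m) :
    insert (newV d (m + 1)) (stageFacet d i (m + 1) S \ Fsub d (m + 1) ∪
      (Fsub d (m + 1)).erase (origV d y)) = stageFacet d i y (insert (m + 1) S) := by
  have hSm : ∀ a ∈ S, a ≤ m := fun a ha => (mem_Ioc.1 (hS ha)).2
  ext (a | a) <;> rw [newV_eq hmd, origV_eq hyd] <;> by_cases ha : (a : ℕ) ∈ S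
  · have := hSm a ha
    simp [Fin.ext_iff, ha]
    omega
  · simp [Fin.ext_iff, ha]
    omega
  · have := hSm a ha
    simp [Fin.ext_iff, ha]
    omega
  · simp [Fin.ext_iff, ha]
    omega

def diamStage (d i m : ℕ) : Set (Finset (V d)) :=
  downClosure (fun p : ℕ × Finset ℕ => stageFacet d i p.1 p.2)
    {p | p.1 ∈ Ioc m (d + 1) ∧ p.2 ⊆ Ioc i m}

theorem sdC_GammaC_of_lt {i j : ℕ} (hji : j < i) (hi : i ≤ d + 1) :
    sdC (newV d j) (Fsub d j) (GammaC d i) = GammaC d i := by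
  refine sdC_eq_self_of_notMem (fun F hF G hGF => hGF.trans hF) (fun h => ?_) _
  exact (origV_mem_Gface hi).1 (h (mem_image.2 ⟨i, mem_Ioc.2 ⟨hji, hi⟩, rfl⟩)) rfl

theorem sdC_GammaC_self {i : ℕ} (hi : i ≤ d) :
    sdC (newV d i) (Fsub d i) (GammaC d i) = diamStage d i i := by
  have hGC : GammaC d i = downClosure (fun _ : Unit => Gface d i) Set.univ := by
    ext G
    simp [GammaC, simplexOn, downClosure]
  have hFG : Fsub d i ⊆ Gface d i := fun x hx => by
    obtain ⟨m, hm, rfl⟩ := mem_image.1 hx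
    rw [mem_Ioc] at hm
    rw [origV_mem_Gface hm.2]
    omega
  rw [hGC, sdC_downClosure fun _ _ => by rw [newV_eq hi]; exact inr_notMem_Gface]
  ext G
  simp only [diamStage, downClosure, Set.mem_ofPred_eq, Set.mem_univ, true_and, Ioc_self,
    subset_empty]
  constructor
  · rintro (⟨-, h, -⟩ | ⟨-, -, y, hy, hG⟩)
    · exact absurd hFG h
    · obtain ⟨m, hm, rfl⟩ := mem_image.1 hy
      rw [mem_Ioc] at hm
      rw [cone_Gface_eq_stageFacet hi hm.1 hm.2] at hG
      exact ⟨(m, ∅), ⟨mem_Ioc.2 hm, rfl⟩, hG⟩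
  · rintro ⟨⟨x, S⟩, ⟨hx, rfl⟩, hG⟩
    rw [mem_Ioc] at hx
    refine Or.inr ⟨(), hFG, origV d x, mem_image.2 ⟨x, mem_Ioc.2 hx, rfl⟩, ?_⟩
    rwa [cone_Gface_eq_stageFacet hi hx.1 hx.2]

theorem Fsub_subset_stageFacet_iff {i m x : ℕ} {S : Finset ℕ} (him : i ≤ m)
    (hx : x ∈ Ioc m (d + 1)) (hS : S ⊆ Ioc i m) :
    Fsub d (m + 1) ⊆ stageFacet d i x S ↔ x = m + 1 := by
  rw [mem_Ioc] at hx
  constructor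
  · intro h
    by_contra hxm
    rcases (origV_mem_stageFacet hx.2).1 (h (mem_image.2 ⟨x, mem_Ioc.2 (by omega), rfl⟩))
      with h | ⟨-, -, h⟩
    exacts [by omega, h rfl]
  · rintro rfl y hy
    obtain ⟨a, ha, rfl⟩ := mem_image.1 hy
    rw [mem_Ioc] at ha
    rw [origV_mem_stageFacet ha.2]
    exact Or.inr ⟨by omega, fun h => by have := mem_Ioc.1 (hS h); omega, by omega⟩

theorem newV_notMem_stageFacet {i m x : ℕ} {S : Finset ℕ} (him : i ≤ m) (hmd : m + 1 ≤ d)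
    (hS : S ⊆ Ioc i m) : newV d (m + 1) ∉ stageFacet d i x S := by
  rw [newV_mem_stageFacet hmd]
  rintro (h | ⟨-, h⟩)
  exacts [by omega, by have := mem_Ioc.1 (hS h); omega]

theorem sdC_diamStage {i m : ℕ} (him : i ≤ m) (hmd : m + 1 ≤ d) :
    sdC (newV d (m + 1)) (Fsub d (m + 1)) (diamStage d i m) = diamStage d i (m + 1) := by
  have hS_succ {S : Finset ℕ} (hS : S ⊆ Ioc i m) : S ⊆ Ioc i (m + 1) :=
    hS.trans (Ioc_subset_Ioc_right (by omega))
  rw [diamStage, sdC_downClosure fun p hp => newV_notMem_stageFacet him hmd hp.2]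
  ext G
  simp only [diamStage, downClosure, Set.mem_ofPred_eq, Prod.exists]
  constructor
  · rintro (⟨x, S, ⟨hx, hS⟩, hF, hG⟩ | ⟨x, S, ⟨hx, hS⟩, hF, y, hy, hG⟩)
    · have := (Fsub_subset_stageFacet_iff him hx hS).not.1 hF
      rw [mem_Ioc] at hx
      exact ⟨x, S, ⟨mem_Ioc.2 (by omega), hS_succ hS⟩, hG⟩
    · obtain rfl := (Fsub_subset_stageFacet_iff him hx hS).1 hF
      obtain ⟨y, hy', rfl⟩ := mem_image.1 hy
      rw [mem_Ioc] at hy'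
      rw [cone_stageFacet_eq him hmd hy'.1 hy'.2 hS] at hG
      refine ⟨y, insert (m + 1) S, ⟨mem_Ioc.2 hy', insert_subset (mem_Ioc.2 ⟨by omega, le_rfl⟩)
        (hS_succ hS)⟩, hG⟩
  · rintro ⟨x, S, ⟨hx, hS⟩, hG⟩
    have hS' : S.erase (m + 1) ⊆ Ioc i m := fun a ha => by
      have := mem_Ioc.1 (hS (mem_of_mem_erase ha))
      exact mem_Ioc.2 ⟨this.1, by have := ne_of_mem_erase ha; omega⟩
    by_cases hm : m + 1 ∈ S
    · have hm1 : m + 1 ∈ Ioc m (d + 1) := mem_Ioc.2 (by omega)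
      refine Or.inr ⟨m + 1, S.erase (m + 1), ⟨hm1, hS'⟩,
        (Fsub_subset_stageFacet_iff him hm1 hS').2 rfl, origV d x, mem_image.2 ⟨x, hx, rfl⟩, ?_⟩
      rw [mem_Ioc] at hx
      rwa [cone_stageFacet_eq him hmd hx.1 hx.2 hS', insert_erase hm]
    · rw [erase_eq_of_notMem hm] at hS'
      rw [mem_Ioc] at hx
      have hx' : x ∈ Ioc m (d + 1) := mem_Ioc.2 (by omega)
      refine Or.inl ⟨x, S, ⟨hx', hS'⟩, fun h => ?_, hG⟩
      have := (Fsub_subset_stageFacet_iff him hx' hS').1 h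
      omega


theorem foldl_sdC_GammaC {i : ℕ} (hi : i ≤ d + 1) {j : ℕ} (hj : j ≤ d + 1) :
    (List.range j).foldl (fun Γ t => sdC (newV d t) (Fsub d t) Γ) (GammaC d i) =
      if j ≤ i then GammaC d i else diamStage d i (j - 1) := by
  induction j with
  | zero => rfl
  | succ j ih =>
    rw [List.range_succ, List.foldl_append, List.foldl_cons, List.foldl_nil, ih (by omega)]
    rcases lt_trichotomy j i with hji | rfl | hij
    · rw [if_pos hji.le, if_pos (show j + 1 ≤ i by omega), sdC_GammaC_of_lt hji hi]
    · rw [if_pos le_rfl, if_neg (by omega), Nat.add_sub_cancel, sdC_GammaC_self (by omega)]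
    · obtain ⟨m, rfl⟩ : ∃ m, j = m + 1 := ⟨j - 1, by omega⟩
      rw [if_neg (by omega), if_neg (by omega), Nat.add_sub_cancel, Nat.add_sub_cancel,
        sdC_diamStage (by omega) (by omega)]

/-- The facet `{0,…,i-1, v_i} ∪ {j ∈ (i,d] \ S} ∪ {v_j : j ∈ S}` of `⋄(Γ_i)`. -/
def diamFacet (d i : ℕ) (S : Finset ℕ) : Finset (V d) := stageFacet d i (d + 1) S

theorem origV_mem_diamFacet {i m : ℕ} {S : Finset ℕ} (hm : m ≤ d + 1) :
    origV d m ∈ diamFacet d i S ↔ m < i ∨ (i < m ∧ m ∉ S ∧ m ≠ d + 1) :=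
  origV_mem_stageFacet hm

theorem newV_mem_diamFacet {i m : ℕ} {S : Finset ℕ} (hm : m ≤ d) :
    newV d m ∈ diamFacet d i S ↔ m = i ∨ (i < m ∧ m ∈ S) :=
  newV_mem_stageFacet hm

theorem Diam_GammaC {i : ℕ} (hi : i ≤ d + 1) :
    Diam d (GammaC d i) = downClosure (diamFacet d i) {S | S ⊆ Ioc i d} := by
  rw [Diam, foldl_sdC_GammaC hi le_rfl]
  split_ifs with hdi
  · obtain rfl : i = d + 1 := by omega
    have hG : Gface d (d + 1) = diamFacet d (d + 1) ∅ := by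
      ext (a | a) <;> simp [diamFacet] <;> omega
    ext G
    simp [GammaC, simplexOn, downClosure, Ioc_eq_empty_of_le, hG]
  · ext G
    simp [diamStage, downClosure, diamFacet, Nat.Ioc_succ_singleton]

theorem eq_of_diamFacet_subset {i i' : ℕ} {S S' : Finset ℕ} (hi : i ≤ d + 1) (hi' : i' ≤ d + 1)
    (hS : S ⊆ Ioc i d) (hS' : S' ⊆ Ioc i' d) (h : diamFacet d i S ⊆ diamFacet d i' S') :
    i = i' ∧ S = S' := by
  obtain rfl : i = i' := by
    rcases lt_trichotomy i i' with hlt | heq | hlt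
    · have := h ((newV_mem_diamFacet (by omega)).2 (Or.inl rfl))
      rcases (newV_mem_diamFacet (by omega)).1 this with h | ⟨h, -⟩ <;> omega
    · exact heq
    · have := h ((origV_mem_diamFacet (by omega)).2 (Or.inl hlt))
      rcases (origV_mem_diamFacet (by omega)).1 this with h | ⟨h, -⟩ <;> omega
  refine ⟨rfl, Finset.ext fun m => ?_⟩
  constructor
  · intro hm
    have hm' := mem_Ioc.1 (hS hm)
    rcases (newV_mem_diamFacet hm'.2).1 (h ((newV_mem_diamFacet hm'.2).2 (Or.inr ⟨hm'.1, hm⟩)))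
      with h | ⟨-, h⟩
    exacts [by omega, h]
  · intro hm
    have hm' := mem_Ioc.1 (hS' hm)
    by_contra hmS
    rcases (origV_mem_diamFacet (by omega)).1
      (h ((origV_mem_diamFacet (by omega)).2 (Or.inr ⟨hm'.1, hmS, by omega⟩))) with h | ⟨-, h, -⟩
    exacts [by omega, h hm]

theorem isFacet_Diam_GammaC_iff {i : ℕ} (hi : i ≤ d + 1) {F : Finset (V d)} :
    isFacet (Diam d (GammaC d i)) F ↔ ∃ S ⊆ Ioc i d, F = diamFacet d i S := by
  rw [Diam_GammaC hi, isFacet_downClosure_iff fun S hS S' hS' h => ?_]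
  · rfl
  · rw [(eq_of_diamFacet_subset hi hi hS hS' h).2]

theorem isFacet_DiamU_iff {I : Finset ℕ} (hI : ∀ i ∈ I, i ≤ d + 1) {F : Finset (V d)} :
    isFacet (DiamU d I) F ↔ ∃ i ∈ I, ∃ S ⊆ Ioc i d, F = diamFacet d i S := by
  have hU : DiamU d I = downClosure (fun p : ℕ × Finset ℕ => diamFacet d p.1 p.2)
      {p | p.1 ∈ I ∧ p.2 ⊆ Ioc p.1 d} := by
    have : GammaU d I = ⋃ i, ⋃ (_ : i ∈ I), GammaC d i := by
      ext G
      simp [GammaU, GammaC, simplexOn]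
    rw [DiamU, this, Diam_iUnion]
    simp_rw [Diam_iUnion]
    ext G
    simp +contextual [Diam_GammaC, hI, downClosure, and_assoc]
  rw [hU, isFacet_downClosure_iff fun p hp p' hp' h => ?_]
  · simp [and_assoc]
  · obtain ⟨h1, h2⟩ := eq_of_diamFacet_subset (hI _ hp.1) (hI _ hp'.1) hp.2 hp'.2 h
    rw [h1, h2]

theorem diffSet_diamFacet {i : ℕ} {S : Finset ℕ} (hS : S ⊆ Ioc i d) (F0 : Finset (V d)) :
    diffSet d (Ioc i d) F0 (diamFacet d i S) = S ∆ (Ioc i d).filter (origV d · ∉ F0) := by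
  ext m
  simp only [diffSet, mem_filter, mem_symmDiff, ne_eq, decide_eq_decide]
  by_cases hm : m ∈ Ioc i d
  · have hm' := mem_Ioc.1 hm
    rw [origV_mem_diamFacet (by omega)]
    by_cases hmS : m ∈ S <;> by_cases h0 : origV d m ∈ F0 <;> simp [hm, hmS, h0] <;> omega
  · refine iff_of_false (fun h => hm h.1) ?_
    rintro (⟨h, -⟩ | ⟨⟨h, -⟩, -⟩)
    exacts [hm (hS h), hm h]

theorem mem_iff_mem_of_posVerts_subset {i m : ℕ} {S S' D : Finset ℕ} (hD : D ⊆ Ioc i d)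
    (h : posVerts d (diamFacet d i S) D ⊆ diamFacet d i S') (hm : m ∈ D) : m ∈ S ↔ m ∈ S' := by
  have hm' := mem_Ioc.1 (hD hm)
  constructor
  · intro hmS
    have hx : newV d m ∈ posVerts d (diamFacet d i S) D :=
      mem_filter.2 ⟨(newV_mem_diamFacet hm'.2).2 (Or.inr ⟨hm'.1, hmS⟩), m, hm, Or.inr rfl⟩
    rcases (newV_mem_diamFacet hm'.2).1 (h hx) with h | ⟨-, h⟩
    exacts [by omega, h]
  · intro hmS'
    by_contra hmS
    have hx : origV d m ∈ posVerts d (diamFacet d i S) D :=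
      mem_filter.2 ⟨(origV_mem_diamFacet (by omega)).2 (Or.inr ⟨hm'.1, hmS, by omega⟩), m, hm,
        Or.inl rfl⟩
    rcases (origV_mem_diamFacet (by omega)).1 (h hx) with h | ⟨-, h, -⟩
    exacts [by omega, h hmS']

theorem erase_subset_diamFacet_symmDiff {i m : ℕ} {S : Finset ℕ} (hm : m ∈ Ioc i d) {x : V d}
    (hxF : x ∈ diamFacet d i S) (hx : x = origV d m ∨ x = newV d m) :
    (diamFacet d i S).erase x ⊆ diamFacet d i (S ∆ {m}) := by
  rw [mem_Ioc] at hm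
  have hside : origV d m ∈ diamFacet d i S ↔ newV d m ∉ diamFacet d i S := by
    rw [origV_mem_diamFacet (by omega), newV_mem_diamFacet hm.2]
    by_cases hmS : m ∈ S <;> simp [hmS] <;> omega
  intro z hz
  obtain ⟨hzx, hzF⟩ := mem_erase.1 hz
  have hzo : z ≠ origV d m := by rintro rfl; rcases hx with rfl | rfl <;> tauto
  have hzn : z ≠ newV d m := by rintro rfl; rcases hx with rfl | rfl <;> tauto
  rcases z with a | a
  · rw [origV_eq (by omega), ne_eq, Sum.inl.injEq, Fin.ext_iff] at hzo
    simp only [diamFacet, inl_mem_stageFacet, mem_symmDiff, mem_singleton] at hzF ⊢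
    tauto
  · rw [newV_eq hm.2, ne_eq, Sum.inr.injEq, Fin.ext_iff] at hzn
    simp only [diamFacet, inr_mem_stageFacet, mem_symmDiff, mem_singleton] at hzF ⊢
    tauto

theorem erase_origV_subset_diamFacet {i j : ℕ} {S : Finset ℕ} (hji : j < i) (hi : i ≤ d + 1)
    (hS : S ⊆ Ioc i d) :
    (diamFacet d i S).erase (origV d j) ⊆ diamFacet d j (insert i S ∩ Ioc j d) := by
  have hSi : ∀ b ∈ S, i < b := fun b hb => (mem_Ioc.1 (hS hb)).1
  intro z hz
  obtain ⟨hzj, hzF⟩ := mem_erase.1 hz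
  rcases z with a | a
  · have haj : (a : ℕ) ≠ j := fun h =>
      hzj (by rw [origV_eq (by omega)]; exact congrArg _ (Fin.ext h))
    simp only [diamFacet, inl_mem_stageFacet, mem_inter, mem_insert, mem_Ioc] at hzF ⊢
    by_cases ha : (a : ℕ) ∈ S
    · have := hSi a ha
      simp [ha] at hzF
      omega
    · simp [ha] at hzF ⊢
      omega
  · have := a.isLt
    simp only [diamFacet, inr_mem_stageFacet, mem_inter, mem_insert, mem_Ioc] at hzF ⊢
    by_cases ha : (a : ℕ) ∈ S <;> simp [ha] at hzF ⊢ <;> omega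

section DegLexBlock

variable {i : ℕ} (hi : i ≤ d + 1) {F0 : Finset (V d)} {L : List (Finset (V d))}
  (hL : IsDegLexOrder d (Ioc i d) (Diam d (GammaC d i)) F0 L) {t : ℕ} (ht : t < L.length)
include hi hL ht

theorem IsDegLexOrder.posVerts_not_subset {G : Finset (V d)} (hG : G ∈ L.take t) :
    ¬ posVerts d L[t] (diffSet d (Ioc i d) F0 L[t]) ⊆ G := by
  obtain ⟨-, hmem, hpair⟩ := hL
  have hlex := hpair.rel_of_mem_take_of_mem_drop hG
    (by rw [List.drop_eq_getElem_cons ht]; exact List.mem_cons_self)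
  obtain ⟨S, hS, hF⟩ := (isFacet_Diam_GammaC_iff hi).1 ((hmem _).1 (List.getElem_mem ht))
  obtain ⟨S', hS', rfl⟩ := (isFacet_Diam_GammaC_iff hi).1 ((hmem _).1 (List.mem_of_mem_take hG))
  rw [hF, diffSet_diamFacet hS] at hlex ⊢
  rw [diffSet_diamFacet hS'] at hlex
  refine fun hsub => hlex.not_subset fun m hm => ?_
  have hSS' :=
    mem_iff_mem_of_posVerts_subset (symmDiff_subset_of_subset hS (filter_subset _ _)) hsub hm
  rw [mem_symmDiff] at hm ⊢
  rwa [← hSS']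

theorem IsDegLexOrder.exists_mem_take_erase_subset {x : V d}
    (hx : x ∈ posVerts d L[t] (diffSet d (Ioc i d) F0 L[t])) :
    ∃ G ∈ L.take t, L[t].erase x ⊆ G := by
  obtain ⟨-, hmem, hpair⟩ := hL
  obtain ⟨S, hS, hF⟩ := (isFacet_Diam_GammaC_iff hi).1 ((hmem _).1 (List.getElem_mem ht))
  obtain ⟨hxF, m, hmD, hxm⟩ := mem_filter.1 hx
  rw [hF, diffSet_diamFacet hS] at hmD
  have hm : m ∈ Ioc i d := symmDiff_subset_of_subset hS (filter_subset _ _) hmD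
  have hSm : S ∆ {m} ⊆ Ioc i d := symmDiff_subset_of_subset hS (singleton_subset_iff.2 hm)
  have hGmem : diamFacet d i (S ∆ {m}) ∈ L :=
    (hmem _).2 ((isFacet_Diam_GammaC_iff hi).2 ⟨_, hSm, rfl⟩)
  have hD : diffSet d (Ioc i d) F0 (diamFacet d i (S ∆ {m})) =
      (S ∆ (Ioc i d).filter (origV d · ∉ F0)).erase m := by
    rw [diffSet_diamFacet hSm, symmDiff_right_comm]
    generalize S ∆ (Ioc i d).filter (origV d · ∉ F0) = D at hmD ⊢
    ext n
    rcases eq_or_ne n m with rfl | hn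
    · simp [mem_symmDiff, hmD]
    · simp [mem_symmDiff, hn]
  have hcard := card_erase_lt_of_mem hmD
  refine ⟨_, List.mem_take_of_pairwise hpair ht hGmem (fun h => ?_) (fun h => ?_), ?_⟩
  · rw [h, hF, diffSet_diamFacet hS] at hD
    exact hcard.ne (congrArg card hD).symm
  · have := h.card_le
    rw [hF, diffSet_diamFacet hS, hD] at this
    omega
  · rw [hF] at hxF ⊢
    exact erase_subset_diamFacet_symmDiff hm hxF hxm

end DegLexBlock

section Concatenation

variable {l : List ℕ} {F0s : List (Finset (V d))} {Ls : List (List (Finset (V d)))}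

theorem mem_getD_blocks_iff (hle : ∀ i ∈ l, i ≤ d + 1)
    (hblocks : ∀ ℓ < l.length, IsDegLexOrder d (Ioc (l.getD ℓ 0) d)
      (Diam d (GammaC d (l.getD ℓ 0))) (F0s.getD ℓ ∅) (Ls.getD ℓ []))
    {u : ℕ} (hu : u < l.length) {G : Finset (V d)} :
    G ∈ Ls.getD u [] ↔ ∃ S ⊆ Ioc l[u] d, G = diamFacet d l[u] S := by
  rw [(hblocks u hu).2.1, List.getD_eq_getElem _ _ hu,
    isFacet_Diam_GammaC_iff (hle _ (List.getElem_mem hu))]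

theorem mem_flatten_blocks_iff (hle : ∀ i ∈ l, i ≤ d + 1) (hLslen : Ls.length = l.length)
    (hblocks : ∀ ℓ < l.length, IsDegLexOrder d (Ioc (l.getD ℓ 0) d)
      (Diam d (GammaC d (l.getD ℓ 0))) (F0s.getD ℓ ∅) (Ls.getD ℓ []))
    {G : Finset (V d)} :
    G ∈ Ls.flatten ↔ ∃ i ∈ l, ∃ S ⊆ Ioc i d, G = diamFacet d i S := by
  rw [List.mem_flatten]
  constructor
  · rintro ⟨B, hB, hG⟩
    obtain ⟨u, hu, rfl⟩ := List.mem_iff_getElem.1 hB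
    have hu' : u < l.length := hLslen ▸ hu
    rw [← List.getD_eq_getElem _ [] hu, mem_getD_blocks_iff hle hblocks hu'] at hG
    exact ⟨l[u], List.getElem_mem hu', hG⟩
  · rintro ⟨i, hi, hG⟩
    obtain ⟨u, hu, rfl⟩ := List.mem_iff_getElem.1 hi
    have hu' : u < Ls.length := hLslen ▸ hu
    refine ⟨Ls.getD u [], ?_, (mem_getD_blocks_iff hle hblocks hu).2 hG⟩
    rw [List.getD_eq_getElem _ _ hu']
    exact List.getElem_mem hu'

theorem nodup_flatten_blocks (hl : l.Pairwise (· < ·)) (hle : ∀ i ∈ l, i ≤ d + 1)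
    (hLslen : Ls.length = l.length)
    (hblocks : ∀ ℓ < l.length, IsDegLexOrder d (Ioc (l.getD ℓ 0) d)
      (Diam d (GammaC d (l.getD ℓ 0))) (F0s.getD ℓ ∅) (Ls.getD ℓ [])) :
    Ls.flatten.Nodup := by
  refine List.nodup_flatten.2 ⟨fun B hB => ?_, List.pairwise_iff_getElem.2 fun u v hu hv huv => ?_⟩
  · obtain ⟨u, hu, rfl⟩ := List.mem_iff_getElem.1 hB
    rw [← List.getD_eq_getElem _ [] hu]
    exact (hblocks u (hLslen ▸ hu)).1
  · intro G hGu hGv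
    rw [← List.getD_eq_getElem _ [] hu, mem_getD_blocks_iff hle hblocks (hLslen ▸ hu)] at hGu
    rw [← List.getD_eq_getElem _ [] hv, mem_getD_blocks_iff hle hblocks (hLslen ▸ hv)] at hGv
    obtain ⟨S, hS, rfl⟩ := hGu
    obtain ⟨S', hS', hSS'⟩ := hGv
    have := (eq_of_diamFacet_subset (hle _ (List.getElem_mem _)) (hle _ (List.getElem_mem _))
      hS hS' hSS'.le).1
    exact (List.pairwise_iff_getElem.1 hl u v _ _ huv).ne this

theorem origV_notMem_of_mem_getD_blocks (hle : ∀ i ∈ l, i ≤ d + 1)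
    (hblocks : ∀ ℓ < l.length, IsDegLexOrder d (Ioc (l.getD ℓ 0) d)
      (Diam d (GammaC d (l.getD ℓ 0))) (F0s.getD ℓ ∅) (Ls.getD ℓ []))
    {u : ℕ} (hu : u < l.length) {G : Finset (V d)} (hG : G ∈ Ls.getD u []) : origV d l[u] ∉ G := by
  obtain ⟨S, -, rfl⟩ := (mem_getD_blocks_iff hle hblocks hu).1 hG
  rw [origV_mem_diamFacet (hle _ (List.getElem_mem hu))]
  omega

theorem exists_mem_getD_blocks_erase_subset (hle : ∀ i ∈ l, i ≤ d + 1)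
    (hblocks : ∀ ℓ < l.length, IsDegLexOrder d (Ioc (l.getD ℓ 0) d)
      (Diam d (GammaC d (l.getD ℓ 0))) (F0s.getD ℓ ∅) (Ls.getD ℓ []))
    {u : ℕ} (hu : u < l.length) {i : ℕ} {S : Finset ℕ} (hui : l[u] < i) (hi : i ≤ d + 1)
    (hS : S ⊆ Ioc i d) : ∃ G ∈ Ls.getD u [], (diamFacet d i S).erase (origV d l[u]) ⊆ G :=
  ⟨_, (mem_getD_blocks_iff hle hblocks hu).2 ⟨_, inter_subset_right, rfl⟩,
    erase_origV_subset_diamFacet hui hi hS⟩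

theorem isRestriction_flatten_blocks (hl : l.Pairwise (· < ·)) (hle : ∀ i ∈ l, i ≤ d + 1)
    (hLslen : Ls.length = l.length)
    (hblocks : ∀ ℓ < l.length, IsDegLexOrder d (Ioc (l.getD ℓ 0) d)
      (Diam d (GammaC d (l.getD ℓ 0))) (F0s.getD ℓ ∅) (Ls.getD ℓ []))
    {ℓ : ℕ} (hℓ : ℓ < l.length) {t : ℕ} (ht : t < (Ls.getD ℓ []).length) :
    IsRestriction Ls.flatten ((Ls.take ℓ).flatten.length + t)
      (((l.take ℓ).map (origV d)).toFinset ∪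
        posVerts d ((Ls.getD ℓ []).getD t ∅)
          (diffSet d (Ioc (l.getD ℓ 0) d) (F0s.getD ℓ ∅) ((Ls.getD ℓ []).getD t ∅))) := by
  have hℓ' : ℓ < Ls.length := hLslen ▸ hℓ
  have hi : l[ℓ] ≤ d + 1 := hle _ (List.getElem_mem hℓ)
  have hB := hblocks ℓ hℓ
  rw [List.getD_eq_getElem _ _ hℓ'] at hB ht ⊢
  rw [List.getD_eq_getElem _ _ hℓ] at hB ⊢
  rw [List.getD_eq_getElem _ _ ht]
  obtain ⟨S, hS, hF⟩ := (isFacet_Diam_GammaC_iff hi).1 ((hB.2.1 _).1 (List.getElem_mem ht))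
  have hprev {x : V d} : x ∈ ((l.take ℓ).map (origV d)).toFinset ↔
      ∃ u, ∃ hu : u < l.length, u < ℓ ∧ origV d l[u] = x := by
    simp only [List.mem_toFinset, List.mem_map, List.mem_take_iff_exists_lt]
    exact ⟨fun ⟨_, ⟨u, hu, huℓ, rfl⟩, h⟩ => ⟨u, hu, huℓ, h⟩,
      fun ⟨u, hu, huℓ, h⟩ => ⟨_, ⟨u, hu, huℓ, rfl⟩, h⟩⟩
  have hlt {u : ℕ} (hu : u < ℓ) : l[u] < l[ℓ] := List.pairwise_iff_getElem.1 hl u ℓ _ _ hu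
  refine isRestriction_of_erase_subset (List.offset_lt_length_flatten hℓ' ht)
    (List.getD_flatten_offset hℓ' ht ∅) ?_ ?_ ?_
  · refine union_subset (fun x hx => ?_) (filter_subset _ _)
    obtain ⟨u, hu, huℓ, rfl⟩ := hprev.1 hx
    rw [hF, origV_mem_diamFacet (hle _ (List.getElem_mem hu))]
    exact Or.inl (hlt huℓ)
  · rw [List.take_flatten_offset hℓ' ht.le]
    rintro G hG hRG
    rcases List.mem_append.1 hG with hG | hG
    · obtain ⟨B, hB', hGB⟩ := List.mem_flatten.1 hG
      obtain ⟨u, hu, huℓ, rfl⟩ := List.mem_take_iff_exists_lt.1 hB'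
      rw [← List.getD_eq_getElem _ [] hu] at hGB
      exact origV_notMem_of_mem_getD_blocks hle hblocks (hLslen ▸ hu) hGB
        (hRG (mem_union_left _ (hprev.2 ⟨u, _, huℓ, rfl⟩)))
    · exact hB.posVerts_not_subset hi ht hG (subset_union_right.trans hRG)
  · rw [List.take_flatten_offset hℓ' ht.le]
    intro x hx
    rcases mem_union.1 hx with hx | hx
    · obtain ⟨u, hu, huℓ, rfl⟩ := hprev.1 hx
      obtain ⟨G, hG, hsub⟩ :=
        exists_mem_getD_blocks_erase_subset hle hblocks hu (hlt huℓ) hi hS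
      rw [List.getD_eq_getElem _ _ (hLslen ▸ hu)] at hG
      refine ⟨G, List.mem_append_left _ (List.mem_flatten.2 ⟨_, ?_, hG⟩), hF ▸ hsub⟩
      exact List.mem_take_iff_exists_lt.2 ⟨u, _, huℓ, rfl⟩
    · obtain ⟨G, hG, hsub⟩ := hB.exists_mem_take_erase_subset hi ht hx
      exact ⟨G, List.mem_append_right _ hG, hsub⟩

end Concatenation

end Diamond

theorem stmt19_general (d : ℕ) (l : List ℕ) (hl : l.Pairwise (· < ·))
    (hle : ∀ i ∈ l, i ≤ d+1)
    (F0s : List (Finset (V d)))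
    (Ls : List (List (Finset (V d)))) (hLslen : Ls.length = l.length)
    (hblocks : ∀ ℓ < l.length,
      IsDegLexOrder d (Finset.Ioc (l.getD ℓ 0) d) (Diam d (GammaC d (l.getD ℓ 0)))
        (F0s.getD ℓ ∅) (Ls.getD ℓ [])) :
    IsShelling (DiamU d l.toFinset) Ls.flatten ∧
    ∀ ℓ < l.length, ∀ i < (Ls.getD ℓ []).length,
      IsRestriction Ls.flatten ((Ls.take ℓ).flatten.length + i)
        ((((l.take ℓ).map (origV d)).toFinset) ∪
          posVerts d ((Ls.getD ℓ []).getD i ∅)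
            (diffSet d (Finset.Ioc (l.getD ℓ 0) d) (F0s.getD ℓ ∅)
              ((Ls.getD ℓ []).getD i ∅))) := by
  refine ⟨⟨nodup_flatten_blocks hl hle hLslen hblocks, fun F => ?_, fun j hj => ?_⟩,
    fun _ hℓ _ ht => isRestriction_flatten_blocks hl hle hLslen hblocks hℓ ht⟩
  · rw [mem_flatten_blocks_iff hle hLslen hblocks,
      isFacet_DiamU_iff fun i hi => hle i (List.mem_toFinset.1 hi)]
    simp only [List.mem_toFinset]
  · obtain ⟨ℓ, hℓ, t, ht, rfl⟩ := List.exists_offset_of_lt_length_flatten hj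
    rw [← List.getD_eq_getElem _ [] hℓ] at ht
    exact ⟨_, isRestriction_flatten_blocks hl hle hLslen hblocks (hLslen ▸ hℓ) ht⟩

/-- concatenating the degree lexicographic orders of the blocks
`⋄(Γ_{i_ℓ})` gives a shelling of `⋄(Γ_{i_1},…,Γ_{i_k})`, with explicitly
described restriction faces. -/
theorem stmt19 (d : ℕ) (l : List ℕ) (hl : l.Pairwise (· < ·)) (hne : l ≠ [])
    (hle : ∀ i ∈ l, i ≤ d+1)
    (F0s : List (Finset (V d))) (hF0len : F0s.length = l.length)
    (hF0 : ∀ ℓ < l.length, isFacet (Diam d (GammaC d (l.getD ℓ 0))) (F0s.getD ℓ ∅))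
    (Ls : List (List (Finset (V d)))) (hLslen : Ls.length = l.length)
    (hblocks : ∀ ℓ < l.length,
      IsDegLexOrder d (Finset.Ioc (l.getD ℓ 0) d) (Diam d (GammaC d (l.getD ℓ 0)))
        (F0s.getD ℓ ∅) (Ls.getD ℓ [])) :
    IsShelling (DiamU d l.toFinset) Ls.flatten ∧
    ∀ ℓ < l.length, ∀ i < (Ls.getD ℓ []).length,
      IsRestriction Ls.flatten ((Ls.take ℓ).flatten.length + i)
        ((((l.take ℓ).map (origV d)).toFinset) ∪
          posVerts d ((Ls.getD ℓ []).getD i ∅)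
            (diffSet d (Finset.Ioc (l.getD ℓ 0) d) (F0s.getD ℓ ∅)
              ((Ls.getD ℓ []).getD i ∅))) :=
  stmt19_general d l hl hle F0s Ls hLslen hblocks

end Paper
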